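/- For positive real numbers x ≥ y > 1, the Gamma function satisfies x^{x-1}/y^{y-1} · e^{y-x} ≤ Γ(x)/Γ(y) ≤ x^{x-1/2}/y^{y-1/2} · e^{y-x}. -/

import Mathlib

/-!
For `t > 0` put `F t = log Γ(t) - (t - 1) log t + t` and `G t = (t - 1/2) log t - t - log Γ(t)`;
the two bounds are `F y ≤ F x` and `G y ≤ G x` exponentiated. With `ψ = (log Γ)'` we have
`F' t = ψ t - log t + 1/t` and `G' t = log t - 1/(2t) - ψ t`. Both are nonnegative: for
`c = 1` and `c = 1/2`, the recurrence `ψ (s + 1) = ψ s + 1/s` together with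
`1/(s+1) ≤ log (1 + 1/s) ≤ (1/s + 1/(s+1))/2` makes `ψ s - log s + c/s` monotone along
`s, s + 1, s + 2, …`, and it tends to `0` because convexity of `log Γ` traps `ψ s` between
`log (s - 1)` and `log s`.
-/

open Real Filter Topology Set

theorem le_of_tendsto_of_le_add_one {g : ℝ → ℝ} {t L : ℝ} (hstep : ∀ s ≥ t, g s ≤ g (s + 1))
    (hlim : Tendsto g atTop (𝓝 L)) : g t ≤ L := by
  have hmono : Monotone fun n : ℕ ↦ g (t + n) := monotone_nat_of_le_succ fun n ↦ by
    simpa [add_assoc] using hstep (t + n) (by simp)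
  simpa using hmono.ge_of_tendsto
    (hlim.comp (tendsto_atTop_add_const_left _ t tendsto_natCast_atTop_atTop)) 0

theorem monotoneOn_Ioi_of_hasDerivAt_nonneg {f f' : ℝ → ℝ} {a : ℝ}
    (hf : ∀ x ∈ Ioi a, HasDerivAt f (f' x) x) (hf' : ∀ x ∈ Ioi a, 0 ≤ f' x) :
    MonotoneOn f (Ioi a) :=
  monotoneOn_of_hasDerivWithinAt_nonneg (convex_Ioi a)
    (fun x hx ↦ (hf x hx).continuousAt.continuousWithinAt)
    (by simpa only [interior_Ioi] using fun x hx ↦ (hf x hx).hasDerivWithinAt)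
    (by simpa only [interior_Ioi] using hf')

namespace Real

noncomputable def digamma : ℝ → ℝ := logDeriv Gamma

theorem hasDerivAt_log_Gamma {x : ℝ} (hx : 0 < x) :
    HasDerivAt (fun t ↦ log (Gamma t)) (digamma x) x := by
  have hΓ : DifferentiableAt ℝ Gamma x :=
    differentiableAt_Gamma fun m ↦ ((neg_nonpos.2 m.cast_nonneg).trans_lt hx).ne'
  simpa [digamma, logDeriv_apply] using hΓ.hasDerivAt.log (Gamma_pos_of_pos hx).ne'

theorem digamma_add_one {x : ℝ} (hx : 0 < x) : digamma (x + 1) = digamma x + x⁻¹ := by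
  have hshift : HasDerivAt (fun t ↦ log (Gamma (t + 1))) (digamma (x + 1)) x :=
    (hasDerivAt_log_Gamma (by linarith)).comp_add_const x 1
  refine hshift.unique
    (((hasDerivAt_log_Gamma hx).add (hasDerivAt_log hx.ne')).congr_of_eventuallyEq ?_)
  filter_upwards [eventually_gt_nhds hx] with t ht
  rw [Pi.add_apply, Gamma_add_one ht.ne', log_mul ht.ne' (Gamma_pos_of_pos ht).ne', add_comm]

theorem digamma_le_log {x : ℝ} (hx : 0 < x) : digamma x ≤ log x := by
  have := convexOn_log_Gamma.le_slope_of_hasDerivAt hx (mem_Ioi.2 (by linarith)) (lt_add_one x)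
    (hasDerivAt_log_Gamma hx)
  simpa [slope_def_field, Gamma_add_one hx.ne', log_mul hx.ne' (Gamma_pos_of_pos hx).ne']
    using this

theorem log_sub_one_le_digamma {x : ℝ} (hx : 1 < x) : log (x - 1) ≤ digamma x := by
  have hx0 : 0 < x - 1 := by linarith
  have := convexOn_log_Gamma.slope_le_of_hasDerivAt hx0 (mem_Ioi.2 (by linarith)) (sub_one_lt x)
    (hasDerivAt_log_Gamma (by linarith))
  have hΓ := Gamma_add_one hx0.ne'
  rw [sub_add_cancel] at hΓ
  simpa [slope_def_field, hΓ, log_mul hx0.ne' (Gamma_pos_of_pos hx0).ne'] using this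

theorem tendsto_digamma_sub_log : Tendsto (fun x ↦ digamma x - log x) atTop (𝓝 0) := by
  have hlower : Tendsto (fun x ↦ log (1 - x⁻¹)) atTop (𝓝 0) := by
    simpa using ((tendsto_inv_atTop_zero.const_sub 1).log (by norm_num))
  refine tendsto_of_tendsto_of_tendsto_of_le_of_le' hlower tendsto_const_nhds ?_ ?_
  · filter_upwards [eventually_gt_atTop 1] with x hx
    rw [show 1 - x⁻¹ = (x - 1) / x by field_simp, log_div (by linarith) (by linarith)]
    linarith [log_sub_one_le_digamma hx]
  · filter_upwards [eventually_gt_atTop 0] with x hx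
    linarith [digamma_le_log hx]

theorem log_le_sub_inv_div_two {r : ℝ} (hr : 1 ≤ r) : log r ≤ (r - r⁻¹) / 2 := by
  simpa [sinh_log (by linarith)] using self_le_sinh_iff.2 (log_nonneg hr)

theorem log_sub_inv_le_digamma {x : ℝ} (hx : 0 < x) : log x - x⁻¹ ≤ digamma x := by
  suffices log x - x⁻¹ - digamma x ≤ 0 by linarith
  refine le_of_tendsto_of_le_add_one (g := fun s ↦ log s - s⁻¹ - digamma s) (fun s hs ↦ ?_) ?_
  · have hs0 : 0 < s := hx.trans_le hs
    have hlog := log_le_sub_one_of_pos (div_pos hs0 (by linarith : 0 < s + 1))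
    rw [log_div hs0.ne' (by linarith), show s / (s + 1) - 1 = -(s + 1)⁻¹ by field_simp; ring]
      at hlog
    rw [digamma_add_one hs0]
    linarith
  · simpa [sub_right_comm] using tendsto_digamma_sub_log.neg.sub tendsto_inv_atTop_zero

theorem digamma_le_log_sub_inv_two_mul {x : ℝ} (hx : 0 < x) :
    digamma x ≤ log x - (2 * x)⁻¹ := by
  suffices digamma x - log x + (2 * x)⁻¹ ≤ 0 by linarith
  refine le_of_tendsto_of_le_add_one (g := fun s ↦ digamma s - log s + (2 * s)⁻¹)
    (fun s hs ↦ ?_) ?_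
  · have hs0 : 0 < s := hx.trans_le hs
    have hlog := log_le_sub_inv_div_two ((one_le_div hs0).2 (by linarith : s ≤ s + 1))
    rw [log_div (by linarith) hs0.ne',
      show ((s + 1) / s - ((s + 1) / s)⁻¹) / 2 = s⁻¹ - (2 * s)⁻¹ + (2 * (s + 1))⁻¹ by
        field_simp; ring] at hlog
    rw [digamma_add_one hs0]
    linarith
  · simpa using tendsto_digamma_sub_log.add (tendsto_inv_atTop_zero.comp
      (tendsto_id.const_mul_atTop two_pos))

theorem monotoneOn_log_Gamma_sub_mul_log_add :
    MonotoneOn (fun t ↦ log (Gamma t) - (t - 1) * log t + t) (Ioi 0) := by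
  refine monotoneOn_Ioi_of_hasDerivAt_nonneg (fun t ht ↦ ((hasDerivAt_log_Gamma ht).sub
    (((hasDerivAt_id t).sub_const 1).mul (hasDerivAt_log ht.out.ne'))).add (hasDerivAt_id t))
    fun t ht ↦ ?_
  have : (t - 1) * t⁻¹ = 1 - t⁻¹ := by field_simp [ht.out.ne']
  simp only [id, this]
  linarith [log_sub_inv_le_digamma ht]

theorem monotoneOn_mul_log_sub_sub_log_Gamma :
    MonotoneOn (fun t ↦ (t - 1 / 2) * log t - t - log (Gamma t)) (Ioi 0) := by
  refine monotoneOn_Ioi_of_hasDerivAt_nonneg (fun t ht ↦ ((((hasDerivAt_id t).sub_const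
    (1 / 2)).mul (hasDerivAt_log ht.out.ne')).sub (hasDerivAt_id t)).sub (hasDerivAt_log_Gamma ht))
    fun t ht ↦ ?_
  have : (t - 1 / 2) * t⁻¹ = 1 - (2 * t)⁻¹ := by field_simp [ht.out.ne']
  simp only [id, this]
  linarith [digamma_le_log_sub_inv_two_mul ht]

end Real

theorem stmt_6 (x y : ℝ) (hy : 1 < y) (hxy : y ≤ x) :
    x ^ (x - 1) / y ^ (y - 1) * Real.exp (y - x) ≤ Real.Gamma x / Real.Gamma y ∧
    Real.Gamma x / Real.Gamma y ≤ x ^ (x - 1 / 2) / y ^ (y - 1 / 2) * Real.exp (y - x) := by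
  have hy0 : 0 < y := by linarith
  have hx0 : 0 < x := hy0.trans_le hxy
  have hlower := monotoneOn_log_Gamma_sub_mul_log_add hy0 hx0 hxy
  have hupper := monotoneOn_mul_log_sub_sub_log_Gamma hy0 hx0 hxy
  have hratio : Gamma x / Gamma y = exp (log (Gamma x) - log (Gamma y)) := by
    rw [exp_sub, exp_log (Gamma_pos_of_pos hx0), exp_log (Gamma_pos_of_pos hy0)]
  simp only [hratio, rpow_def_of_pos hx0, rpow_def_of_pos hy0, ← exp_sub, ← exp_add, exp_le_exp]
  constructor <;> linarith
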